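/- arXiv:2603.16452 — 2 statements merged into one kernel-verified Lean document; each statement's English description precedes it below -/
import Mathlib

section
/- If $a \ge b > 0$, then the supremum of $|\nabla u|$ over the closed rectangle $[0,a]\times[0,b]$, where $u(x,y) = \sin(\pi x/a)\sin(\pi y/b)$, equals $\pi/b$. -/
open Real Set

lemma dsin_aux (c x : ℝ) :
    HasDerivAt (fun t => Real.sin (π * t / c)) (Real.cos (π * x / c) * (π / c)) x := by
  have h : HasDerivAt (fun t : ℝ => π * t / c) (π / c) x := by
    have := (hasDerivAt_id x).const_mul (π / c)
    simpa [mul_div_assoc, mul_comm, mul_left_comm] using this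
  exact (Real.hasDerivAt_sin _).comp x h

/-- If `a ≥ b > 0`, the supremum of `|∇u|` over `[0,a] × [0,b]`, where
`u(x,y) = sin(πx/a) sin(πy/b)`, equals `π / b`. -/
theorem stmt_2 (a b : ℝ) (hb : 0 < b) (hab : b ≤ a)
    (u : ℝ → ℝ → ℝ) (hu : ∀ x y, u x y = Real.sin (π * x / a) * Real.sin (π * y / b)) :
    sSup {v : ℝ | ∃ x ∈ Icc (0:ℝ) a, ∃ y ∈ Icc (0:ℝ) b,
        v = Real.sqrt ((deriv (fun t => u t y) x) ^ 2 + (deriv (fun t => u x t) y) ^ 2)}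
      = π / b := by
  have ha : 0 < a := lt_of_lt_of_le hb hab
  have hpi : 0 < π := Real.pi_pos
  have hpb : 0 < π / b := div_pos hpi hb
  have hd1 : ∀ x y : ℝ, deriv (fun t => u t y) x
      = Real.cos (π * x / a) * (π / a) * Real.sin (π * y / b) := by
    intro x y
    have : (fun t => u t y) = fun t => Real.sin (π * t / a) * Real.sin (π * y / b) := by
      funext t; exact hu t y
    rw [this]
    exact ((dsin_aux a x).mul_const _).deriv
  have hd2 : ∀ x y : ℝ, deriv (fun t => u x t) y
      = Real.sin (π * x / a) * (Real.cos (π * y / b) * (π / b)) := by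
    intro x y
    have : (fun t => u x t) = fun t => Real.sin (π * x / a) * Real.sin (π * t / b) := by
      funext t; exact hu x t
    rw [this]
    exact ((dsin_aux b y).const_mul _).deriv
  apply IsGreatest.csSup_eq
  constructor
  · refine ⟨a / 2, ⟨by positivity, by linarith⟩, 0, ⟨le_refl 0, le_of_lt hb⟩, ?_⟩
    rw [hd1, hd2]
    have hx : π * (a / 2) / a = π / 2 := by field_simp
    rw [hx]
    simp [Real.cos_pi_div_two, Real.sin_pi_div_two]
    rw [Real.sqrt_sq hpb.le]
  · rintro v ⟨x, hx, y, hy, rfl⟩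
    rw [hd1, hd2]
    refine le_trans (Real.sqrt_le_sqrt ?_) (le_of_eq (Real.sqrt_sq hpb.le))
    have h1 := Real.sin_sq_add_cos_sq (π * x / a)
    have h2 := Real.sin_sq_add_cos_sq (π * y / b)
    have hpa : 0 < π / a := div_pos hpi ha
    have hle : π / a ≤ π / b := div_le_div_of_nonneg_left hpi.le hb hab
    have hC : Real.cos (π * x / a) ^ 2 ≤ 1 := by nlinarith [sq_nonneg (Real.sin (π * x / a))]
    have hS : Real.sin (π * x / a) ^ 2 ≤ 1 := by nlinarith [sq_nonneg (Real.cos (π * x / a))]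
    have hq2 : (π / a) ^ 2 ≤ (π / b) ^ 2 := by nlinarith
    nlinarith [mul_nonneg (sq_nonneg (Real.sin (π * y / b))) (sub_nonneg.2 hq2),
      mul_nonneg (mul_nonneg (sq_nonneg (Real.sin (π * y / b))) (sq_nonneg (π / a)))
        (sub_nonneg.2 hC),
      mul_nonneg (mul_nonneg (sq_nonneg (Real.cos (π * y / b))) (sq_nonneg (π / b)))
        (sub_nonneg.2 hS)]
end

section
/- For all $a, b > 0$, the smooth minimum $\mathrm{smin}(a,b) = \left(\log(e^{1/a} + e^{1/b} - 1)\right)^{-1}$ satisfies $\frac{1}{2}\min(a,b) \le \mathrm{smin}(a,b) \le \min(a,b)$. -/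
open Real

/-- For `a, b > 0`, the smooth minimum `smin(a,b) = (log (e^(1/a) + e^(1/b) - 1))⁻¹`
satisfies `min(a,b)/2 ≤ smin(a,b) ≤ min(a,b)`. -/
theorem stmt_16 (a b : ℝ) (ha : 0 < a) (hb : 0 < b) :
    min a b / 2 ≤ (Real.log (Real.exp (1/a) + Real.exp (1/b) - 1))⁻¹ ∧
    (Real.log (Real.exp (1/a) + Real.exp (1/b) - 1))⁻¹ ≤ min a b := by
  set m := min a b with hmdef
  have hm : 0 < m := lt_min ha hb
  have h1 : Real.exp (1/m) ≤ Real.exp (1/a) + Real.exp (1/b) - 1 := by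
    rcases min_choice a b with h | h
    · have : (1:ℝ) ≤ Real.exp (1/b) := Real.one_le_exp (by positivity)
      rw [hmdef, h]; linarith
    · have : (1:ℝ) ≤ Real.exp (1/a) := Real.one_le_exp (by positivity)
      rw [hmdef, h]; linarith
  have ha' : Real.exp (1/a) ≤ Real.exp (1/m) :=
    Real.exp_le_exp.2 (by gcongr; exact min_le_left a b)
  have hb' : Real.exp (1/b) ≤ Real.exp (1/m) :=
    Real.exp_le_exp.2 (by gcongr; exact min_le_right a b)
  have h2 : Real.exp (1/a) + Real.exp (1/b) - 1 ≤ Real.exp (2/m) := by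
    have hsq : (0:ℝ) ≤ (Real.exp (1/m) - 1)^2 := sq_nonneg _
    have hme : Real.exp (2/m) = Real.exp (1/m) * Real.exp (1/m) := by
      rw [← Real.exp_add]; ring_nf
    nlinarith
  have hlog1 : 1/m ≤ Real.log (Real.exp (1/a) + Real.exp (1/b) - 1) := by
    rw [← Real.log_exp (1/m)]
    exact Real.log_le_log (Real.exp_pos _) h1
  have hlog2 : Real.log (Real.exp (1/a) + Real.exp (1/b) - 1) ≤ 2/m := by
    rw [← Real.log_exp (2/m)]
    exact Real.log_le_log (lt_of_lt_of_le (Real.exp_pos _) h1) h2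
  have hpos : 0 < Real.log (Real.exp (1/a) + Real.exp (1/b) - 1) :=
    lt_of_lt_of_le (by positivity) hlog1
  constructor
  · have := one_div_le_one_div_of_le hpos hlog2
    rw [one_div, div_eq_mul_inv 2 m, mul_inv, inv_inv, one_div] at this
    linarith [this]
  · have := one_div_le_one_div_of_le (by positivity : (0:ℝ) < 1/m) hlog1
    rw [one_div_one_div] at this
    rw [← one_div]
    exact this
end
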